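/- arXiv:2402.18190 — 8 statements merged into one kernel-verified Lean document; each statement's English description precedes it below -/
import Mathlib

section
/- Let G be a connected graph with edge weight ω: E(G) → ℝ∖{0}, and suppose G has a 1-separator: G = H₁ ∪ H₂ where H₁, H₂ are connected subgraphs with V(H₁) ∩ V(H₂) = {v} for a single vertex v, E(H₁) ∩ E(H₂) = ∅, and both V(H₁)∖V(H₂) and V(H₂)∖V(H₁) are nonempty. Let ωᵢ be the restriction of ω to E(Hᵢ). Then rank L_{G,ω} = rank L_{H₁,ω₁} + rank L_{H₂,ω₂}, where L_{H,ω} denotes the Laplacian matrix of the graph H weighted by the edge weight ω. -/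
open Finset
open scoped Classical

/-- The weighted Laplacian of a graph with adjacency relation `A` and edge weight `w`. -/
noncomputable def lapMat {V : Type*} [Fintype V] (A : V → V → Prop) (w : V → V → ℝ) :
    Matrix V V ℝ :=
  Matrix.of fun i j =>
    if i = j then ∑ k, (if A i k then w i k else 0)
    else if A i j then -(w i j) else 0

section Helpers

variable {V : Type*} [Fintype V]

lemma lapMat_rowsum (A : V → V → Prop) (w : V → V → ℝ) (hirr : ∀ i, ¬ A i i) (i : V) :
    ∑ j, lapMat A w i j = 0 := by
  have h1 : ∀ j, lapMat A w i j
      = (if i = j then (∑ k, if A i k then w i k else 0) else 0)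
        - (if A i j then w i j else 0) := by
    intro j
    by_cases h : i = j
    · subst h; simp [lapMat, hirr i]
    · simp only [lapMat, Matrix.of_apply, if_neg h, zero_sub]
      split <;> ring
  simp only [h1]
  rw [Finset.sum_sub_distrib, Finset.sum_ite_eq, if_pos (Finset.mem_univ i), sub_self]

variable (H : SimpleGraph V) (w : V → V → ℝ)

lemma lapMat_symm (hsymm : ∀ i j, w i j = w j i) (i j : V) :
    lapMat H.Adj w i j = lapMat H.Adj w j i := by
  by_cases h : i = j
  · subst h; rfl
  · simp only [lapMat, Matrix.of_apply, if_neg h, if_neg (Ne.symm h)]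
    rw [hsymm, SimpleGraph.adj_comm]

lemma lapMat_row_zero (i : V) (hi : i ∉ H.support) (j : V) : lapMat H.Adj w i j = 0 := by
  have hA : ∀ k, ¬ H.Adj i k := fun k hk => hi ((SimpleGraph.mem_support H).mpr ⟨k, hk⟩)
  by_cases h : i = j
  · subst h; simp [lapMat, hA]
  · simp [lapMat, h, hA j]

lemma lapMat_col_zero (j : V) (hj : j ∉ H.support) (i : V) : lapMat H.Adj w i j = 0 := by
  by_cases h : i = j
  · subst h; exact lapMat_row_zero H w i hj i
  · have hA : ¬ H.Adj i j := fun ha => hj ((SimpleGraph.mem_support H).mpr ⟨i, ha.symm⟩)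
    simp [lapMat, h, hA]

lemma lapMat_mulVec_congr (x y : V → ℝ) (h : ∀ j ∈ H.support, x j = y j) :
    (lapMat H.Adj w).mulVec x = (lapMat H.Adj w).mulVec y := by
  funext i
  simp only [Matrix.mulVec, dotProduct]
  refine Finset.sum_congr rfl fun j _ => ?_
  by_cases hj : j ∈ H.support
  · rw [h j hj]
  · rw [lapMat_col_zero H w j hj i, zero_mul, zero_mul]

lemma lapMat_mulVec_const (x : V → ℝ) (c : ℝ) (h : ∀ j ∈ H.support, x j = c) :
    (lapMat H.Adj w).mulVec x = 0 := by
  rw [lapMat_mulVec_congr H w x (fun _ => c) h]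
  funext i
  simp only [Matrix.mulVec, dotProduct, Pi.zero_apply]
  rw [← Finset.sum_mul, lapMat_rowsum H.Adj w (fun i => H.irrefl) i, zero_mul]

lemma lapMat_mulVec_not_support (x : V → ℝ) (i : V) (hi : i ∉ H.support) :
    (lapMat H.Adj w).mulVec x i = 0 := by
  simp only [Matrix.mulVec, dotProduct]
  exact Finset.sum_eq_zero fun j _ => by rw [lapMat_row_zero H w i hi j, zero_mul]

lemma lapMat_sum_mulVec (hsymm : ∀ i j, w i j = w j i) (x : V → ℝ) :
    ∑ i, (lapMat H.Adj w).mulVec x i = 0 := by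
  simp only [Matrix.mulVec, dotProduct]
  rw [Finset.sum_comm]
  refine Finset.sum_eq_zero fun j _ => ?_
  rw [← Finset.sum_mul]
  have hz : ∑ i, lapMat H.Adj w i j = 0 := by
    calc ∑ i, lapMat H.Adj w i j = ∑ i, lapMat H.Adj w j i :=
          Finset.sum_congr rfl fun i _ => lapMat_symm H w hsymm i j
    _ = 0 := lapMat_rowsum H.Adj w (fun i => H.irrefl) j
  rw [hz, zero_mul]

end Helpers

/-- Rank additivity of the weighted Laplacian along a 1-separator. -/
theorem laplacian_rank_one_separator {V : Type*} [Fintype V]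
    (G H₁ H₂ : SimpleGraph V) (w : V → V → ℝ)
    (hsymm : ∀ i j, w i j = w j i)
    (hnz : ∀ i j, G.Adj i j → w i j ≠ 0)
    (hconn : G.Connected)
    (hunion : G = H₁ ⊔ H₂)
    (hedis : Disjoint H₁.edgeSet H₂.edgeSet)
    (v : V) (hsep : H₁.support ∩ H₂.support = {v})
    (h1 : (H₁.support \ H₂.support).Nonempty)
    (h2 : (H₂.support \ H₁.support).Nonempty)
    (hc1 : (SimpleGraph.induce H₁.support H₁).Connected)
    (hc2 : (SimpleGraph.induce H₂.support H₂).Connected) :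
    (lapMat G.Adj w).rank = (lapMat H₁.Adj w).rank + (lapMat H₂.Adj w).rank := by
  have hv1 : v ∈ H₁.support := by
    have hv : v ∈ H₁.support ∩ H₂.support := hsep ▸ rfl
    exact hv.1
  have hv2 : v ∈ H₂.support := by
    have hv : v ∈ H₁.support ∩ H₂.support := hsep ▸ rfl
    exact hv.2
  -- the Laplacian splits as a sum
  have hnand : ∀ i j, ¬ (H₁.Adj i j ∧ H₂.Adj i j) := by
    rintro i j ⟨ha, hb⟩
    exact (Set.disjoint_left.mp hedis (H₁.mem_edgeSet.mpr ha))
      (H₂.mem_edgeSet.mpr hb)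
  have hadj : ∀ i j, G.Adj i j ↔ H₁.Adj i j ∨ H₂.Adj i j := by
    subst hunion; intro i j; simp [SimpleGraph.sup_adj]
  have hGadd : lapMat G.Adj w = lapMat H₁.Adj w + lapMat H₂.Adj w := by
    ext i j
    simp only [lapMat, Matrix.add_apply, Matrix.of_apply]
    by_cases h : i = j
    · simp only [if_pos h]
      rw [← Finset.sum_add_distrib]
      refine Finset.sum_congr rfl fun k _ => ?_
      by_cases ha : H₁.Adj i k <;> by_cases hb : H₂.Adj i k
      · exact absurd ⟨ha, hb⟩ (hnand i k)
      all_goals simp [hadj, ha, hb]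
    · simp only [if_neg h]
      by_cases ha : H₁.Adj i j <;> by_cases hb : H₂.Adj i j
      · exact absurd ⟨ha, hb⟩ (hnand i j)
      all_goals simp [hadj, ha, hb]
  set L := lapMat G.Adj w with hL
  set L₁ := lapMat H₁.Adj w with hL1
  set L₂ := lapMat H₂.Adj w with hL2
  -- range inclusions
  have hr1 : LinearMap.range L₁.mulVecLin ≤ LinearMap.range L.mulVecLin := by
    rintro u ⟨x, rfl⟩
    refine ⟨fun i => if i ∈ H₁.support then x i else x v, ?_⟩
    simp only [Matrix.mulVecLin_apply, hGadd, Matrix.add_mulVec]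
    have e2 : L₂.mulVec (fun i => if i ∈ H₁.support then x i else x v) = 0 := by
      refine lapMat_mulVec_const H₂ w _ (x v) fun j hj => ?_
      by_cases hj1 : j ∈ H₁.support
      · have hjv : j ∈ ({v} : Set V) := hsep ▸ Set.mem_inter hj1 hj
        rw [Set.mem_singleton_iff] at hjv
        simp [hj1, hjv]
      · simp [hj1]
    have e1 : L₁.mulVec (fun i => if i ∈ H₁.support then x i else x v) = L₁.mulVec x :=
      lapMat_mulVec_congr H₁ w _ x fun j hj => by simp [hj]
    rw [e1, e2, add_zero]
  have hr2 : LinearMap.range L₂.mulVecLin ≤ LinearMap.range L.mulVecLin := by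
    rintro u ⟨x, rfl⟩
    refine ⟨fun i => if i ∈ H₂.support then x i else x v, ?_⟩
    simp only [Matrix.mulVecLin_apply, hGadd, Matrix.add_mulVec]
    have e1 : L₁.mulVec (fun i => if i ∈ H₂.support then x i else x v) = 0 := by
      refine lapMat_mulVec_const H₁ w _ (x v) fun j hj => ?_
      by_cases hj2 : j ∈ H₂.support
      · have hjv : j ∈ ({v} : Set V) := hsep ▸ Set.mem_inter hj hj2
        rw [Set.mem_singleton_iff] at hjv
        simp [hj2, hjv]
      · simp [hj2]
    have e2 : L₂.mulVec (fun i => if i ∈ H₂.support then x i else x v) = L₂.mulVec x :=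
      lapMat_mulVec_congr H₂ w _ x fun j hj => by simp [hj]
    rw [e1, e2, zero_add]
  have hle : LinearMap.range L.mulVecLin ≤
      LinearMap.range L₁.mulVecLin ⊔ LinearMap.range L₂.mulVecLin := by
    rintro u ⟨x, rfl⟩
    rw [Matrix.mulVecLin_apply, hGadd, Matrix.add_mulVec]
    exact Submodule.add_mem_sup ⟨x, rfl⟩ ⟨x, rfl⟩
  have hrange : LinearMap.range L.mulVecLin =
      LinearMap.range L₁.mulVecLin ⊔ LinearMap.range L₂.mulVecLin :=
    le_antisymm hle (sup_le hr1 hr2)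
  have hdisj : LinearMap.range L₁.mulVecLin ⊓ LinearMap.range L₂.mulVecLin = ⊥ := by
    rw [Submodule.eq_bot_iff]
    rintro u hu
    obtain ⟨hu1, hu2⟩ := Submodule.mem_inf.mp hu
    obtain ⟨x1, hx1⟩ := hu1
    obtain ⟨x2, hx2⟩ := hu2
    have hnv : ∀ j, j ≠ v → u j = 0 := by
      intro j hj
      by_cases hj1 : j ∈ H₁.support
      · by_cases hj2 : j ∈ H₂.support
        · have hjv : j ∈ ({v} : Set V) := hsep ▸ Set.mem_inter hj1 hj2
          exact absurd (Set.mem_singleton_iff.mp hjv) hj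
        · rw [← hx2]; exact lapMat_mulVec_not_support H₂ w x2 j hj2
      · rw [← hx1]; exact lapMat_mulVec_not_support H₁ w x1 j hj1
    have hsum : ∑ i, u i = 0 := by
      rw [← hx1]; exact lapMat_sum_mulVec H₁ w hsymm x1
    have huv : u v = 0 := by
      rw [← hsum]
      exact (Finset.sum_eq_single v (fun b _ hb => hnv b hb)
        (fun h => absurd (Finset.mem_univ v) h)).symm
    funext i
    by_cases hiv : i = v
    · subst hiv; exact huv
    · exact hnv i hiv
  have hfd1 : FiniteDimensional ℝ (LinearMap.range L₁.mulVecLin) := inferInstance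
  rw [Matrix.rank, Matrix.rank, Matrix.rank, hrange]
  have := Submodule.finrank_sup_add_finrank_inf_eq
    (LinearMap.range L₁.mulVecLin) (LinearMap.range L₂.mulVecLin)
  rw [hdisj, finrank_bot, add_zero] at this
  exact this
end

section
/- Let x₁, x₂, x₃ ∈ ℝ be distinct. The 3×3 symmetric matrix L with off-diagonal entries L[1,2] = L[2,1] = −1/(x₁−x₂), L[2,3] = L[3,2] = −1/(x₂−x₃), L[1,3] = L[3,1] = −1/(x₃−x₁), and diagonal entries chosen so that each row sums to zero, has rank exactly 1. -/
/-- The Laplacian of `K₃` weighted by `1/(x₁−x₂), 1/(x₂−x₃), 1/(x₃−x₁)` has rank exactly 1. -/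
theorem K3_laplacian_rank_one (x₁ x₂ x₃ : ℝ)
    (h12 : x₁ ≠ x₂) (h13 : x₁ ≠ x₃) (h23 : x₂ ≠ x₃) :
    (!![1/(x₁-x₂) + 1/(x₃-x₁), -(1/(x₁-x₂)), -(1/(x₃-x₁));
        -(1/(x₁-x₂)), 1/(x₁-x₂) + 1/(x₂-x₃), -(1/(x₂-x₃));
        -(1/(x₃-x₁)), -(1/(x₂-x₃)), 1/(x₂-x₃) + 1/(x₃-x₁)] : Matrix (Fin 3) (Fin 3) ℝ).rank
      = 1 := by
  have d12 : x₁ - x₂ ≠ 0 := sub_ne_zero.mpr h12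
  have d31 : x₃ - x₁ ≠ 0 := sub_ne_zero.mpr (Ne.symm h13)
  have d23 : x₂ - x₃ ≠ 0 := sub_ne_zero.mpr h23
  have d32 : x₃ - x₂ ≠ 0 := sub_ne_zero.mpr (Ne.symm h23)
  set a : ℝ := 1/(x₁-x₂) with ha
  set b : ℝ := 1/(x₂-x₃) with hb
  set c : ℝ := 1/(x₃-x₁) with hc
  have hac : a + c ≠ 0 := by
    rw [ha, hc]
    rw [div_add_div _ _ d12 d31]
    apply div_ne_zero
    · intro h; apply d32; linarith
    · exact mul_ne_zero d12 d31
  set L : Matrix (Fin 3) (Fin 3) ℝ :=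
    !![a + c, -a, -c; -a, a + b, -b; -c, -b, b + c] with hL
  have habc : a*b + b*c + c*a = 0 := by
    rw [ha, hb, hc]; field_simp; ring
  -- Upper bound: L = U * V with U a 3×1 and V a 1×3 matrix
  set U : Matrix (Fin 3) (Fin 1) ℝ := Matrix.of fun i _ => ![a + c, -a, -c] i with hU
  set V : Matrix (Fin 1) (Fin 3) ℝ :=
    Matrix.of fun _ j => ![1, -a/(a+c), -c/(a+c)] j with hV
  have hfact : L = U * V := by
    ext i j
    fin_cases i <;> fin_cases j <;>
      simp [hL, hU, hV, Matrix.mul_apply, Fin.sum_univ_succ] <;>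
      field_simp <;> nlinarith [habc]
  have hub : L.rank ≤ 1 := by
    calc L.rank = (U * V).rank := by rw [hfact]
    _ ≤ V.rank := Matrix.rank_mul_le_right U V
    _ ≤ Fintype.card (Fin 1) := V.rank_le_card_height
    _ = 1 := by simp
  -- Lower bound: the first column of L is nonzero
  have hlb : 1 ≤ L.rank := by
    rw [Matrix.rank, Nat.one_le_iff_ne_zero]
    intro h0
    have : LinearMap.range L.mulVecLin = ⊥ := by
      have := Submodule.finrank_eq_zero (R := ℝ)
        (S := LinearMap.range L.mulVecLin) |>.mp h0
      exact this
    have hmem : L.mulVec (Pi.single 0 1) ∈ LinearMap.range L.mulVecLin :=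
      ⟨Pi.single 0 1, rfl⟩
    rw [this, Submodule.mem_bot] at hmem
    have := congrFun hmem 0
    simp [Matrix.mulVec_single, hL] at this
    exact hac this
  omega
end

section
/- Let p be a positive even integer, G a graph on vertex set V, (G, 𝐩) a d-dimensional framework with 𝐩: V → ℝ^d, and ω: E(G) → ℝ a self-stress of (G,𝐩), i.e., Σ_{j: ij∈E} ω(ij)(𝐩(j)−𝐩(i))^{p−1} = 0 for all i ∈ V (where the power is taken coordinatewise). For k ∈ {1,…,d}, define ω^k(ij) := ω(ij)·((𝐩(j))_k − (𝐩(i))_k)^{p−2}. Then the k-th coordinate vector x_k ∈ ℝ^V of 𝐩, defined by (x_k)_i = (𝐩(i))_k, lies in the kernel of the weighted Laplacian L_{G,ω^k}. -/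
open Finset
open scoped Classical

/-! Since `(L_μ x)_i = ∑_{j ~ i} μ(ij) (x_i - x_j)`, weighting by `ω(ij) (x_j - x_i)^(p-2)` turns the
`i`-th entry of `L x` into `-∑_{j ~ i} ω(ij) (x_j - x_i)^(p-1)`, the `k`-th coordinate of the
equilibrium condition of the self-stress at `i`. -/

section Laplacian

variable {V : Type*} [Fintype V] {A : V → V → Prop}

lemma lapMat_apply_of_irreflexive (hA : ∀ i, ¬ A i i) (w : V → V → ℝ) (i j : V) :
    lapMat A w i j =
      (if i = j then ∑ k, (if A i k then w i k else 0) else 0) +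
        (if A i j then -(w i j) else 0) := by
  by_cases hij : i = j
  · subst hij
    simp [lapMat, hA i]
  · simp [lapMat, hij]

lemma lapMat_mulVec_apply (hA : ∀ i, ¬ A i i) (w : V → V → ℝ) (x : V → ℝ) (i : V) :
    (lapMat A w).mulVec x i = ∑ j, if A i j then w i j * (x i - x j) else 0 := by
  simp only [Matrix.mulVec, dotProduct, lapMat_apply_of_irreflexive hA, add_mul, sum_add_distrib,
    ite_mul, zero_mul, sum_ite_eq, mem_univ, if_true, sum_mul]
  rw [← sum_add_distrib]
  refine sum_congr rfl fun j _ => ?_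
  split_ifs <;> ring

lemma lapMat_powWeight_mulVec_apply (hA : ∀ i, ¬ A i i) (w : V → V → ℝ) (x : V → ℝ) (n : ℕ)
    (i : V) :
    (lapMat A fun i j => w i j * (x j - x i) ^ n).mulVec x i =
      -∑ j, if A i j then w i j * (x j - x i) ^ (n + 1) else 0 := by
  rw [lapMat_mulVec_apply hA, ← sum_neg_distrib]
  refine sum_congr rfl fun j _ => ?_
  split_ifs <;> ring

end Laplacian

theorem coordinate_vector_in_kernel_general {V : Type*} [Fintype V] (p d : ℕ) (hp : 0 < p)
    (hpe : Even p) (G : SimpleGraph V) (P : V → Fin d → ℝ)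
    (w : V → V → ℝ)
    (hstress : ∀ (i : V) (c : Fin d),
      ∑ j, (if G.Adj i j then w i j * (P j c - P i c) ^ (p - 1) else 0) = 0)
    (k : Fin d) :
    (lapMat G.Adj (fun i j => w i j * (P j k - P i k) ^ (p - 2))).mulVec
      (fun i => P i k) = 0 := by
  have hp2 : p - 2 + 1 = p - 1 := by
    obtain ⟨m, rfl⟩ := hpe
    omega
  funext i
  rw [lapMat_powWeight_mulVec_apply G.loopless.irrefl, hp2, hstress i k, neg_zero, Pi.zero_apply]

/-- For a self-stress `ω` of a `d`-dimensional framework `(G, 𝐩)` and coordinate `k`, the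
`k`-th coordinate vector of `𝐩` lies in the kernel of the Laplacian weighted by the
`k`-th coordinated stress `ω^k`. -/
theorem coordinate_vector_in_kernel {V : Type*} [Fintype V] (p d : ℕ) (hp : 0 < p)
    (hpe : Even p) (G : SimpleGraph V) (P : V → Fin d → ℝ)
    (w : V → V → ℝ) (hsymm : ∀ i j, w i j = w j i)
    (hstress : ∀ (i : V) (c : Fin d),
      ∑ j, (if G.Adj i j then w i j * (P j c - P i c) ^ (p - 1) else 0) = 0)
    (k : Fin d) :
    (lapMat G.Adj (fun i j => w i j * (P j k - P i k) ^ (p - 2))).mulVec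
      (fun i => P i k) = 0 :=
  coordinate_vector_in_kernel_general p d hp hpe G P w hstress k
end

section
/- Let G be a 2-connected graph, e = v₁v₂ an edge of G, and (G, x) a one-dimensional framework with x: V(G) → ℝ injective and a self-stress ω satisfying ω(e) ≠ 0. Let G' be obtained from G by subdividing e: delete e, add a new vertex v₀ and edges v₀v₁, v₀v₂. Define x': V(G') → ℝ by x'(v₀) = (x(v₁)+x(v₂))/2 and x'(u) = x(u) for u ∈ V(G), and ω': E(G') → ℝ by ω'(v₀v₁) = ω'(v₀v₂) = 2^{p−1}ω(v₁v₂) and ω'(f) = ω(f) for f ∈ E(G)∖{e}. Then for every even integer p ≥ 2, ω' is a self-stress of (G', x'), i.e., Σ_{w: uw∈E(G')} ω'(uw)(x'(w)−x'(u))^{p−1} = 0 for every vertex u of G'. -/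
open Finset
open scoped Classical

/-- A graph is 2-connected if it has at least 3 vertices and deleting any vertex leaves it
connected. -/
def TwoConnected {V : Type*} [Fintype V] (G : SimpleGraph V) : Prop :=
  3 ≤ Fintype.card V ∧ ∀ v : V, (SimpleGraph.induce {u | u ≠ v} G).Connected

/-- Subdividing an edge of a one-dimensional framework, placing the new vertex at the
midpoint and scaling the stress on the two new edges by `2^{p−1}`, yields a self-stress
of the subdivided framework. -/
theorem subdivision_self_stress {V : Type*} [Fintype V] (p : ℕ) (hp : 2 ≤ p) (hpe : Even p)
    (G : SimpleGraph V) (h2c : TwoConnected G)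
    (x : V → ℝ) (hx : Function.Injective x)
    (v₁ v₂ : V) (he : G.Adj v₁ v₂)
    (w : V → V → ℝ) (hsymm : ∀ a b, w a b = w b a) (hwe : w v₁ v₂ ≠ 0)
    (hstress : ∀ a : V, ∑ b, (if G.Adj a b then w a b * (x b - x a) ^ (p - 1) else 0) = 0)
    (G' : SimpleGraph (Option V))
    (hG'some : ∀ a b : V, G'.Adj (some a) (some b) ↔
      (G.Adj a b ∧ ¬(a = v₁ ∧ b = v₂) ∧ ¬(a = v₂ ∧ b = v₁)))
    (hG'none : ∀ a : V, G'.Adj none (some a) ↔ (a = v₁ ∨ a = v₂))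
    (x' : Option V → ℝ)
    (hx'none : x' none = (x v₁ + x v₂) / 2)
    (hx'some : ∀ u : V, x' (some u) = x u)
    (w' : Option V → Option V → ℝ)
    (hw'symm : ∀ a b, w' a b = w' b a)
    (hw'new : w' none (some v₁) = 2 ^ (p - 1) * w v₁ v₂ ∧
      w' none (some v₂) = 2 ^ (p - 1) * w v₁ v₂)
    (hw'old : ∀ a b : V, G.Adj a b → ¬(a = v₁ ∧ b = v₂) → ¬(a = v₂ ∧ b = v₁) →
      w' (some a) (some b) = w a b) :
    ∀ u : Option V,
      ∑ z, (if G'.Adj u z then w' u z * (x' z - x' u) ^ (p - 1) else 0) = 0 := by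
  have hne : v₁ ≠ v₂ := he.ne
  have hodd : Odd (p - 1) := Nat.Even.sub_odd (by omega) hpe odd_one
  have hkey : ∀ a b : ℝ, (2:ℝ)^(p-1) * ((a - b)/2)^(p-1) = (a-b)^(p-1) := by
    intro a b
    rw [div_pow, mul_div_cancel₀]
    positivity
  have hneg : ∀ a b : ℝ, (b - a)^(p-1) = -((a - b)^(p-1)) := by
    intro a b
    rw [show b - a = -(a-b) by ring, hodd.neg_pow]
  intro u
  rw [Fintype.sum_option]
  match u with
  | none =>
    rw [if_neg (G'.irrefl), zero_add]
    have hterm : ∀ b : V,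
        (if G'.Adj none (some b) then w' none (some b) * (x' (some b) - x' none) ^ (p-1) else 0)
        = (if b = v₁ then w v₁ v₂ * (x v₁ - x v₂) ^ (p-1) else 0)
          + (if b = v₂ then w v₁ v₂ * (x v₂ - x v₁) ^ (p-1) else 0) := by
      intro b
      by_cases h1 : b = v₁
      · subst h1
        rw [if_pos ((hG'none b).2 (Or.inl rfl)), if_pos rfl, if_neg hne, add_zero,
          hw'new.1, hx'some, hx'none, show x b - (x b + x v₂)/2 = (x b - x v₂)/2 by ring,
          mul_right_comm, hkey]
        ring
      · by_cases h2 : b = v₂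
        · subst h2
          rw [if_pos ((hG'none b).2 (Or.inr rfl)), if_neg h1, zero_add, if_pos rfl,
            hw'new.2, hx'some, hx'none, show x b - (x v₁ + x b)/2 = (x b - x v₁)/2 by ring,
            mul_right_comm, hkey]
          ring
        · rw [if_neg, if_neg h1, if_neg h2, add_zero]
          rw [hG'none]; tauto
    rw [Finset.sum_congr rfl (fun b _ => hterm b), Finset.sum_add_distrib,
      Finset.sum_ite_eq' univ v₁, Finset.sum_ite_eq' univ v₂, if_pos (mem_univ _),
      if_pos (mem_univ _), hneg (x v₂) (x v₁)]
    ring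
  | some a =>
    by_cases h1 : a = v₁
    · rw [h1]
      have hGne : ¬ G'.Adj (some v₁) (some v₂) := by
        rw [hG'some]; tauto
      have hterm : ∀ b : V,
          (if G'.Adj (some v₁) (some b) then
            w' (some v₁) (some b) * (x' (some b) - x' (some v₁)) ^ (p-1) else 0)
          = (if G.Adj v₁ b then w v₁ b * (x b - x v₁) ^ (p-1) else 0)
            - (if b = v₂ then w v₁ v₂ * (x v₂ - x v₁) ^ (p-1) else 0) := by
        intro b
        by_cases h2 : b = v₂
        · subst h2
          rw [if_neg hGne, if_pos he, if_pos rfl]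
          ring
        · rw [if_neg h2, sub_zero]
          by_cases h3 : G.Adj v₁ b
          · have hc1 : ¬ (v₁ = v₁ ∧ b = v₂) := by tauto
            have hc2 : ¬ (v₁ = v₂ ∧ b = v₁) := by tauto
            rw [if_pos ((hG'some v₁ b).2 ⟨h3, hc1, hc2⟩), if_pos h3,
              hw'old v₁ b h3 hc1 hc2, hx'some, hx'some]
          · rw [if_neg, if_neg h3]
            rw [hG'some]; tauto
      have hnone : G'.Adj (some v₁) none :=
        (G'.adj_comm _ _).1 ((hG'none v₁).2 (Or.inl rfl))
      rw [Finset.sum_congr rfl (fun b _ => hterm b), Finset.sum_sub_distrib,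
        hstress v₁, Finset.sum_ite_eq' univ v₂, if_pos (mem_univ _),
        if_pos hnone, hw'symm (some v₁) none, hw'new.1, hx'none, hx'some,
        show (x v₁ + x v₂)/2 - x v₁ = (x v₂ - x v₁)/2 by ring, mul_right_comm, hkey]
      ring
    · by_cases h2 : a = v₂
      · rw [h2]
        have hGne : ¬ G'.Adj (some v₂) (some v₁) := by
          rw [hG'some]; tauto
        have hterm : ∀ b : V,
            (if G'.Adj (some v₂) (some b) then
              w' (some v₂) (some b) * (x' (some b) - x' (some v₂)) ^ (p-1) else 0)
            = (if G.Adj v₂ b then w v₂ b * (x b - x v₂) ^ (p-1) else 0)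
              - (if b = v₁ then w v₂ v₁ * (x v₁ - x v₂) ^ (p-1) else 0) := by
          intro b
          by_cases h3 : b = v₁
          · subst h3
            rw [if_neg hGne, if_pos he.symm, if_pos rfl]
            ring
          · rw [if_neg h3, sub_zero]
            by_cases h4 : G.Adj v₂ b
            · have hc1 : ¬ (v₂ = v₁ ∧ b = v₂) := by tauto
              have hc2 : ¬ (v₂ = v₂ ∧ b = v₁) := by tauto
              rw [if_pos ((hG'some v₂ b).2 ⟨h4, hc1, hc2⟩), if_pos h4,
                hw'old v₂ b h4 hc1 hc2, hx'some, hx'some]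
            · rw [if_neg, if_neg h4]
              rw [hG'some]; tauto
        have hnone : G'.Adj (some v₂) none :=
          (G'.adj_comm _ _).1 ((hG'none v₂).2 (Or.inr rfl))
        rw [Finset.sum_congr rfl (fun b _ => hterm b), Finset.sum_sub_distrib,
          hstress v₂, Finset.sum_ite_eq' univ v₁, if_pos (mem_univ _),
          if_pos hnone, hw'symm (some v₂) none, hw'new.2, hx'none, hx'some,
          show (x v₁ + x v₂)/2 - x v₂ = (x v₁ - x v₂)/2 by ring, mul_right_comm, hkey,
          hsymm v₂ v₁]
        ring
      · have hnone : ¬ G'.Adj (some a) none := by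
          rw [G'.adj_comm, hG'none]; tauto
        rw [if_neg hnone, zero_add]
        have hterm : ∀ b : V,
            (if G'.Adj (some a) (some b) then
              w' (some a) (some b) * (x' (some b) - x' (some a)) ^ (p-1) else 0)
            = (if G.Adj a b then w a b * (x b - x a) ^ (p-1) else 0) := by
          intro b
          by_cases h3 : G.Adj a b
          · have hc1 : ¬ (a = v₁ ∧ b = v₂) := by tauto
            have hc2 : ¬ (a = v₂ ∧ b = v₁) := by tauto
            rw [if_pos ((hG'some a b).2 ⟨h3, hc1, hc2⟩), if_pos h3,
              hw'old a b h3 hc1 hc2, hx'some, hx'some]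
          · rw [if_neg, if_neg h3]
            rw [hG'some]; tauto
        rw [Finset.sum_congr rfl (fun b _ => hterm b)]
        exact hstress a
end

section
/- Let G be a graph on n vertices, e = v₁v₂ ∈ E(G), and ω: E(G) → ℝ with ω(e) ≠ 0. Let G' be obtained from G by subdividing e (new vertex v₀, new edges v₀v₁, v₀v₂ replacing v₁v₂). Define μ: E(G') → ℝ by μ(v₀v₁) = μ(v₀v₂) = 2ω(e) and μ(f) = ω(f) for f ∈ E(G)∖{e}, and let ν(f) = ω(f) for f ∈ E(G). Then rank L_{G',μ} = rank L_{G,ν} + 1. -/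
open Finset
open scoped Classical

/-!
In the Laplacian `L'` of the subdivided graph the new vertex `v₀` carries the pivot `4ω(e)` and
the entries `-2ω(e)` towards `v₁, v₂`; away from `v₀`, `L'` is `L_G` plus `ω(e)` on each entry
of the `{v₁, v₂}` block (each endpoint gains `2ω(e)` of degree from `v₀` but loses `ω(e)` from
`e`, and the entry `-ω(e)` of `e` disappears). Eliminating the pivot subtracts
`(2ω(e))² / 4ω(e) = ω(e)` from exactly that block, so the Schur complement of `L'` at `v₀` is
`L_G`, and the rank of a matrix is that of the pivot plus that of its Schur complement.
-/

lemma Submodule.finrank_prod {K M N : Type*} [Field K] [AddCommGroup M] [Module K M]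
    [AddCommGroup N] [Module K N] (p : Submodule K M) (q : Submodule K N)
    [FiniteDimensional K p] [FiniteDimensional K q] :
    Module.finrank K (p.prod q) = Module.finrank K p + Module.finrank K q := by
  let e : p.prod q ≃ₗ[K] p × q :=
    { toFun x := (⟨x.1.1, x.2.1⟩, ⟨x.1.2, x.2.2⟩)
      invFun y := ⟨(y.1.1, y.2.1), ⟨y.1.2, y.2.2⟩⟩
      map_add' _ _ := rfl
      map_smul' _ _ := rfl
      left_inv _ := rfl
      right_inv _ := rfl }
  rw [e.finrank_eq, Module.finrank_prod]

namespace Matrix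

variable {K : Type*} [Field K] {l m n o : Type*} [Fintype m] [Fintype o]

lemma rank_fromBlocks_zero₁₂_zero₂₁ (A : Matrix l m K) (D : Matrix n o K) :
    (fromBlocks A 0 0 D).rank = A.rank + D.rank := by
  let eDom := LinearEquiv.sumArrowLequivProdArrow m o K K
  let eCod := LinearEquiv.sumArrowLequivProdArrow l n K K
  have h : (fromBlocks A 0 0 D).mulVecLin =
      eCod.symm.toLinearMap ∘ₗ A.mulVecLin.prodMap D.mulVecLin ∘ₗ eDom.toLinearMap := by
    refine LinearMap.ext fun x => funext fun i => ?_
    rcases i with i | i <;> simp [eDom, eCod, fromBlocks_mulVec] <;> rfl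
  rw [rank, h, LinearMap.range_comp, LinearMap.range_comp_of_range_eq_top _ eDom.range,
    LinearEquiv.finrank_map_eq, LinearMap.range_prodMap, Submodule.finrank_prod, rank, rank]

lemma rank_fromBlocks_of_isUnit₁₁ [Fintype l] [Fintype n] [DecidableEq l] [DecidableEq m]
    (A : Matrix m m K) (B : Matrix m n K) (C : Matrix l m K) (D : Matrix l n K) (hA : IsUnit A) :
    (fromBlocks A B C D).rank = Fintype.card m + (D - C * A⁻¹ * B).rank := by
  obtain ⟨_⟩ := hA.nonempty_invertible
  have hL : IsUnit (fromBlocks 1 0 (C * A⁻¹) 1 : Matrix (m ⊕ l) (m ⊕ l) K).det := by simp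
  have hR : IsUnit (fromBlocks 1 (A⁻¹ * B) 0 1 : Matrix (m ⊕ n) (m ⊕ n) K).det := by simp
  rw [fromBlocks_eq_of_invertible₁₁, invOf_eq_nonsing_inv,
    rank_mul_eq_left_of_isUnit_det _ _ hR, rank_mul_eq_right_of_isUnit_det _ _ hL,
    rank_fromBlocks_zero₁₂_zero₂₁, rank_of_isUnit A hA]

lemma rank_eq_rank_pivot_add_one [Fintype n] [DecidableEq n]
    (M : Matrix (Option n) (Option n) K) (h : M none none ≠ 0) :
    M.rank = (of fun i j =>
      M (some i) (some j) - M (some i) none * (M none none)⁻¹ * M none (some j)).rank + 1 := by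
  let e : Option n ≃ Unit ⊕ n := (Equiv.optionEquivSumPUnit n).trans (Equiv.sumComm _ _)
  have hpivot : IsUnit (reindex e e M).toBlocks₁₁ := by
    rw [isUnit_iff_isUnit_det, det_unique]
    exact h.isUnit
  rw [← rank_reindex e e M, ← fromBlocks_toBlocks (reindex e e M),
    rank_fromBlocks_of_isUnit₁₁ _ _ _ _ hpivot, Fintype.card_unit, add_comm]
  congr 2
  ext i j
  simp [e, toBlocks₁₁, toBlocks₁₂, toBlocks₂₁, toBlocks₂₂, mul_apply]

end Matrix

section WeightedLaplacian

variable {V : Type*}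

noncomputable def weightedAdjMat (A : V → V → Prop) (w : V → V → ℝ) : Matrix V V ℝ :=
  Matrix.of fun i j => if A i j then w i j else 0

lemma lapMat_apply_of_irrefl [Fintype V] {A : V → V → Prop} (hA : ∀ i, ¬A i i)
    (w : V → V → ℝ) (i j : V) :
    lapMat A w i j =
      (if i = j then ∑ k, weightedAdjMat A w i k else 0) - weightedAdjMat A w i j := by
  simp only [lapMat, weightedAdjMat, Matrix.of_apply]
  split_ifs <;> simp_all

lemma isSymm_weightedAdjMat (G : SimpleGraph V) {w : V → V → ℝ} (hw : ∀ a b, w a b = w b a) :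
    (weightedAdjMat G.Adj w).IsSymm := by
  ext i j
  simp [weightedAdjMat, G.adj_comm, hw i j]

namespace Subdivision

variable {G : SimpleGraph V} {v₁ v₂ : V} {w : V → V → ℝ} {G' : SimpleGraph (Option V)}
  {μ : Option V → Option V → ℝ}

lemma weightedAdjMat_none_some (hG'none : ∀ a : V, G'.Adj none (some a) ↔ (a = v₁ ∨ a = v₂))
    (hμnew : μ none (some v₁) = 2 * w v₁ v₂ ∧ μ none (some v₂) = 2 * w v₁ v₂) (a : V) :
    weightedAdjMat G'.Adj μ none (some a) = if a = v₁ ∨ a = v₂ then 2 * w v₁ v₂ else 0 := by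
  simp only [weightedAdjMat, Matrix.of_apply, hG'none]
  split_ifs with ha
  · rcases ha with rfl | rfl
    exacts [hμnew.1, hμnew.2]
  · rfl

lemma weightedAdjMat_some_some (he : G.Adj v₁ v₂) (hsymm : ∀ a b, w a b = w b a)
    (hG'some : ∀ a b : V, G'.Adj (some a) (some b) ↔
      (G.Adj a b ∧ ¬(a = v₁ ∧ b = v₂) ∧ ¬(a = v₂ ∧ b = v₁)))
    (hμold : ∀ a b : V, G.Adj a b → ¬(a = v₁ ∧ b = v₂) → ¬(a = v₂ ∧ b = v₁) →
      μ (some a) (some b) = w a b) (a c : V) :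
    weightedAdjMat G'.Adj μ (some a) (some c) = weightedAdjMat G.Adj w a c -
      if a = v₁ ∧ c = v₂ ∨ a = v₂ ∧ c = v₁ then w v₁ v₂ else 0 := by
  simp only [weightedAdjMat, Matrix.of_apply, hG'some]
  by_cases hedge : a = v₁ ∧ c = v₂ ∨ a = v₂ ∧ c = v₁
  · rcases hedge with ⟨rfl, rfl⟩ | ⟨rfl, rfl⟩ <;> simp [he, he.symm, hsymm a c]
  · rw [not_or] at hedge
    by_cases hG : G.Adj a c
    · simp [hG, hedge, hμold a c hG hedge.1 hedge.2]
    · simp [hG, hedge]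

variable [Fintype V]

lemma lapMat_none_none (hne : v₁ ≠ v₂)
    (hG'none : ∀ a : V, G'.Adj none (some a) ↔ (a = v₁ ∨ a = v₂))
    (hμnew : μ none (some v₁) = 2 * w v₁ v₂ ∧ μ none (some v₂) = 2 * w v₁ v₂) :
    lapMat G'.Adj μ none none = 4 * w v₁ v₂ := by
  rw [lapMat_apply_of_irrefl (fun _ => G'.irrefl), Fintype.sum_option]
  simp only [weightedAdjMat_none_some hG'none hμnew]
  rw [Fintype.sum_eq_add v₁ v₂ hne (fun x hx => by simp [hx.1, hx.2])]
  simp [weightedAdjMat]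
  ring

lemma lapMat_none_some (hG'none : ∀ a : V, G'.Adj none (some a) ↔ (a = v₁ ∨ a = v₂))
    (hμnew : μ none (some v₁) = 2 * w v₁ v₂ ∧ μ none (some v₂) = 2 * w v₁ v₂) (a : V) :
    lapMat G'.Adj μ none (some a) = -if a = v₁ ∨ a = v₂ then 2 * w v₁ v₂ else 0 := by
  simp [lapMat_apply_of_irrefl (fun _ => G'.irrefl), weightedAdjMat_none_some hG'none hμnew]

lemma lapMat_some_none (hμsymm : ∀ a b, μ a b = μ b a)
    (hG'none : ∀ a : V, G'.Adj none (some a) ↔ (a = v₁ ∨ a = v₂))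
    (hμnew : μ none (some v₁) = 2 * w v₁ v₂ ∧ μ none (some v₂) = 2 * w v₁ v₂) (a : V) :
    lapMat G'.Adj μ (some a) none = -if a = v₁ ∨ a = v₂ then 2 * w v₁ v₂ else 0 := by
  simp [lapMat_apply_of_irrefl (fun _ => G'.irrefl), (isSymm_weightedAdjMat G' hμsymm).apply,
    weightedAdjMat_none_some hG'none hμnew]

lemma lapMat_some_some (he : G.Adj v₁ v₂) (hsymm : ∀ a b, w a b = w b a)
    (hG'some : ∀ a b : V, G'.Adj (some a) (some b) ↔
      (G.Adj a b ∧ ¬(a = v₁ ∧ b = v₂) ∧ ¬(a = v₂ ∧ b = v₁)))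
    (hG'none : ∀ a : V, G'.Adj none (some a) ↔ (a = v₁ ∨ a = v₂))
    (hμsymm : ∀ a b, μ a b = μ b a)
    (hμnew : μ none (some v₁) = 2 * w v₁ v₂ ∧ μ none (some v₂) = 2 * w v₁ v₂)
    (hμold : ∀ a b : V, G.Adj a b → ¬(a = v₁ ∧ b = v₂) → ¬(a = v₂ ∧ b = v₁) →
      μ (some a) (some b) = w a b) (a c : V) :
    lapMat G'.Adj μ (some a) (some c) = lapMat G.Adj w a c +
      if (a = v₁ ∨ a = v₂) ∧ (c = v₁ ∨ c = v₂) then w v₁ v₂ else 0 := by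
  rw [lapMat_apply_of_irrefl (fun _ => G'.irrefl), lapMat_apply_of_irrefl (fun _ => G.irrefl),
    Fintype.sum_option, (isSymm_weightedAdjMat G' hμsymm).apply,
    weightedAdjMat_none_some hG'none hμnew]
  simp only [Option.some.injEq, weightedAdjMat_some_some he hsymm hG'some hμold,
    Finset.sum_sub_distrib]
  have hremoved : ∑ k, (if a = v₁ ∧ k = v₂ ∨ a = v₂ ∧ k = v₁ then w v₁ v₂ else 0) =
      if a = v₁ ∨ a = v₂ then w v₁ v₂ else 0 := by
    rw [Fintype.sum_eq_add v₁ v₂ he.ne (fun x hx => by simp [hx.1, hx.2])]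
    by_cases h₁ : a = v₁ <;> by_cases h₂ : a = v₂ <;> simp [h₁, h₂, he.ne, he.ne.symm]
  rw [hremoved]
  have hne := he.ne
  generalize ∑ k, weightedAdjMat G.Adj w a k = S
  generalize weightedAdjMat G.Adj w a c = x
  split_ifs <;> first | ring1 | grind

end Subdivision

end WeightedLaplacian

/-- Subdividing an edge `e` of weight `ω(e) ≠ 0` and giving the two new edges weight
`2ω(e)` increases the rank of the weighted Laplacian by exactly one. -/
theorem subdivision_laplacian_rank {V : Type*} [Fintype V]
    (G : SimpleGraph V) (v₁ v₂ : V) (he : G.Adj v₁ v₂)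
    (w : V → V → ℝ) (hsymm : ∀ a b, w a b = w b a) (hwe : w v₁ v₂ ≠ 0)
    (G' : SimpleGraph (Option V))
    (hG'some : ∀ a b : V, G'.Adj (some a) (some b) ↔
      (G.Adj a b ∧ ¬(a = v₁ ∧ b = v₂) ∧ ¬(a = v₂ ∧ b = v₁)))
    (hG'none : ∀ a : V, G'.Adj none (some a) ↔ (a = v₁ ∨ a = v₂))
    (μ : Option V → Option V → ℝ)
    (hμsymm : ∀ a b, μ a b = μ b a)
    (hμnew : μ none (some v₁) = 2 * w v₁ v₂ ∧ μ none (some v₂) = 2 * w v₁ v₂)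
    (hμold : ∀ a b : V, G.Adj a b → ¬(a = v₁ ∧ b = v₂) → ¬(a = v₂ ∧ b = v₁) →
      μ (some a) (some b) = w a b) :
    (lapMat G'.Adj μ).rank = (lapMat G.Adj w).rank + 1 := by
  have hpivot : lapMat G'.Adj μ none none = 4 * w v₁ v₂ :=
    Subdivision.lapMat_none_none he.ne hG'none hμnew
  rw [Matrix.rank_eq_rank_pivot_add_one _ (by rw [hpivot]; exact mul_ne_zero four_ne_zero hwe)]
  congr 2
  ext a c
  rw [Matrix.of_apply, hpivot,
    Subdivision.lapMat_some_some he hsymm hG'some hG'none hμsymm hμnew hμold,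
    Subdivision.lapMat_some_none hμsymm hG'none hμnew, Subdivision.lapMat_none_some hG'none hμnew]
  split_ifs <;> first | ring1 | (field_simp; ring1) | tauto
end

section
/- Let p ≥ 4 be an even integer and let (G, 𝐩) be a two-dimensional framework, where G contains edge v₂v₃ and G' is obtained from G by a K₄⁻-extension along v₂v₃: delete edge v₂v₃, add vertices v₀, v₁ and edges v₀v₁, v₀v₂, v₀v₃, v₁v₂, v₁v₃. Write 𝐩(vᵢ) = (xᵢ, yᵢ), and define 𝐪: V(G') → ℝ² by 𝐪(v₀) = (x₂, y₃), 𝐪(v₁) = (x₃, y₂), 𝐪(u) = 𝐩(u) for u ∈ V(G). Given a self-stress ω of (G,𝐩), define ω': E(G') → ℝ by ω'(v₀v₁) = −ω(v₂v₃), ω'(f) = ω(v₂v₃) for f ∈ {v₀v₂, v₀v₃, v₁v₂, v₁v₃}, and ω'(f) = ω(f) for f ∈ E(G)∖{v₂v₃}. Then ω' is a self-stress of (G', 𝐪). -/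
open Finset
open scoped Classical

/-- A K₄⁻-extension of a planar framework along an edge `v₂v₃`, placing the two new
vertices on the remaining corners of the axis-aligned rectangle spanned by `𝐩(v₂)` and
`𝐩(v₃)`, carries a self-stress of the original framework to one of the extension. -/
theorem K4ext_self_stress {V : Type*} [Fintype V] (p : ℕ) (hp : 4 ≤ p) (hpe : Even p)
    (G : SimpleGraph V) (v₂ v₃ : V) (he : G.Adj v₂ v₃)
    (P : V → Fin 2 → ℝ)
    (w : V → V → ℝ) (hsymm : ∀ a b, w a b = w b a)
    (hstress : ∀ (i : V) (c : Fin 2),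
      ∑ j, (if G.Adj i j then w i j * (P j c - P i c) ^ (p - 1) else 0) = 0)
    (G' : SimpleGraph (V ⊕ Fin 2))
    (hG'old : ∀ a b : V, G'.Adj (Sum.inl a) (Sum.inl b) ↔
      (G.Adj a b ∧ ¬(a = v₂ ∧ b = v₃) ∧ ¬(a = v₃ ∧ b = v₂)))
    (hG'new : ∀ (i : Fin 2) (a : V), G'.Adj (Sum.inr i) (Sum.inl a) ↔ (a = v₂ ∨ a = v₃))
    (hG'nn : ∀ i j : Fin 2, G'.Adj (Sum.inr i) (Sum.inr j) ↔ i ≠ j)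
    (q : V ⊕ Fin 2 → Fin 2 → ℝ)
    (hq0 : q (Sum.inr 0) = ![P v₂ 0, P v₃ 1])
    (hq1 : q (Sum.inr 1) = ![P v₃ 0, P v₂ 1])
    (hqold : ∀ u : V, q (Sum.inl u) = P u)
    (w' : (V ⊕ Fin 2) → (V ⊕ Fin 2) → ℝ)
    (hw'symm : ∀ a b, w' a b = w' b a)
    (hw'nn : w' (Sum.inr 0) (Sum.inr 1) = -(w v₂ v₃))
    (hw'new : ∀ i : Fin 2, w' (Sum.inr i) (Sum.inl v₂) = w v₂ v₃ ∧
      w' (Sum.inr i) (Sum.inl v₃) = w v₂ v₃)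
    (hw'old : ∀ a b : V, G.Adj a b → ¬(a = v₂ ∧ b = v₃) → ¬(a = v₃ ∧ b = v₂) →
      w' (Sum.inl a) (Sum.inl b) = w a b) :
    ∀ (u : V ⊕ Fin 2) (c : Fin 2),
      ∑ z, (if G'.Adj u z then w' u z * (q z c - q u c) ^ (p - 1) else 0) = 0 := by
  have hne : v₂ ≠ v₃ := he.ne
  have hp1 : p - 1 ≠ 0 := by omega
  intro u c
  rw [Fintype.sum_sum_type, Fin.sum_univ_two]
  cases u with
  | inr i =>
    have hV : ∀ b : V, (if G'.Adj (Sum.inr i) (Sum.inl b) then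
        w' (Sum.inr i) (Sum.inl b) * (q (Sum.inl b) c - q (Sum.inr i) c) ^ (p - 1) else 0)
        = (if b = v₂ then w v₂ v₃ * (P v₂ c - q (Sum.inr i) c) ^ (p - 1) else 0)
          + (if b = v₃ then w v₂ v₃ * (P v₃ c - q (Sum.inr i) c) ^ (p - 1) else 0) := by
      intro b
      by_cases h2 : b = v₂
      · obtain rfl := h2.symm
        simp [hG'new, (hw'new i).1, hqold, hne]
      · by_cases h3 : b = v₃
        · obtain rfl := h3.symm
          simp [hG'new, (hw'new i).2, hqold, h2]
        · simp [hG'new, h2, h3]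
    rw [Finset.sum_congr rfl fun b _ => hV b, Finset.sum_add_distrib,
        Finset.sum_ite_eq', Finset.sum_ite_eq']
    simp only [mem_univ, if_true]
    have hws : w' (Sum.inr 1) (Sum.inr 0) = -(w v₂ v₃) := by
      rw [hw'symm]; exact hw'nn
    fin_cases i <;> fin_cases c <;>
      simp [hG'nn, hq0, hq1, hw'nn, hws, zero_pow hp1] <;> ring
  | inl a =>
    by_cases h2 : a = v₂
    · obtain rfl := h2.symm
      have hV : ∀ b : V, (if G'.Adj (Sum.inl v₂) (Sum.inl b) then
          w' (Sum.inl v₂) (Sum.inl b) * (q (Sum.inl b) c - q (Sum.inl v₂) c) ^ (p - 1) else 0)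
          = (if G.Adj v₂ b then w v₂ b * (P b c - P v₂ c) ^ (p - 1) else 0)
            - (if b = v₃ then w v₂ v₃ * (P v₃ c - P v₂ c) ^ (p - 1) else 0) := by
        intro b
        by_cases h3 : b = v₃
        · obtain rfl := h3.symm
          have hna : ¬ G'.Adj (Sum.inl v₂) (Sum.inl v₃) := by rw [hG'old]; tauto
          simp [hna, he]
        · have hc1 : ¬(v₂ = v₂ ∧ b = v₃) := by tauto
          have hc2 : ¬(v₂ = v₃ ∧ b = v₂) := by tauto
          by_cases hadj : G.Adj v₂ b
          · rw [if_pos ((hG'old _ _).2 ⟨hadj, hc1, hc2⟩), hw'old _ _ hadj hc1 hc2,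
                hqold, hqold, if_pos hadj, if_neg h3, sub_zero]
          · have hna : ¬ G'.Adj (Sum.inl v₂) (Sum.inl b) := by rw [hG'old]; tauto
            simp [hna, hadj, h3]
      rw [Finset.sum_congr rfl fun b _ => hV b, Finset.sum_sub_distrib, hstress,
          Finset.sum_ite_eq']
      have ha0 : G'.Adj (Sum.inl v₂) (Sum.inr 0) :=
        (G'.adj_comm _ _).1 ((hG'new 0 v₂).2 (Or.inl rfl))
      have ha1 : G'.Adj (Sum.inl v₂) (Sum.inr 1) :=
        (G'.adj_comm _ _).1 ((hG'new 1 v₂).2 (Or.inl rfl))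
      have hw0 : w' (Sum.inl v₂) (Sum.inr 0) = w v₂ v₃ := by rw [hw'symm]; exact (hw'new 0).1
      have hw1 : w' (Sum.inl v₂) (Sum.inr 1) = w v₂ v₃ := by rw [hw'symm]; exact (hw'new 1).1
      fin_cases c <;>
        simp [ha0, ha1, hw0, hw1, hq0, hq1, hqold, zero_pow hp1] <;> ring
    · by_cases h3 : a = v₃
      · obtain rfl := h3.symm
        have hV : ∀ b : V, (if G'.Adj (Sum.inl v₃) (Sum.inl b) then
            w' (Sum.inl v₃) (Sum.inl b) * (q (Sum.inl b) c - q (Sum.inl v₃) c) ^ (p - 1) else 0)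
            = (if G.Adj v₃ b then w v₃ b * (P b c - P v₃ c) ^ (p - 1) else 0)
              - (if b = v₂ then w v₂ v₃ * (P v₂ c - P v₃ c) ^ (p - 1) else 0) := by
          intro b
          by_cases hb2 : b = v₂
          · obtain rfl := hb2.symm
            have hna : ¬ G'.Adj (Sum.inl v₃) (Sum.inl v₂) := by rw [hG'old]; tauto
            simp [hna, he.symm, hsymm v₃ v₂]
          · have hc1 : ¬(v₃ = v₂ ∧ b = v₃) := by tauto
            have hc2 : ¬(v₃ = v₃ ∧ b = v₂) := by tauto
            by_cases hadj : G.Adj v₃ b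
            · rw [if_pos ((hG'old _ _).2 ⟨hadj, hc1, hc2⟩), hw'old _ _ hadj hc1 hc2,
                  hqold, hqold, if_pos hadj, if_neg hb2, sub_zero]
            · have hna : ¬ G'.Adj (Sum.inl v₃) (Sum.inl b) := by rw [hG'old]; tauto
              simp [hna, hadj, hb2]
        rw [Finset.sum_congr rfl fun b _ => hV b, Finset.sum_sub_distrib, hstress,
            Finset.sum_ite_eq']
        have ha0 : G'.Adj (Sum.inl v₃) (Sum.inr 0) :=
          (G'.adj_comm _ _).1 ((hG'new 0 v₃).2 (Or.inr rfl))
        have ha1 : G'.Adj (Sum.inl v₃) (Sum.inr 1) :=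
          (G'.adj_comm _ _).1 ((hG'new 1 v₃).2 (Or.inr rfl))
        have hw0 : w' (Sum.inl v₃) (Sum.inr 0) = w v₂ v₃ := by rw [hw'symm]; exact (hw'new 0).2
        have hw1 : w' (Sum.inl v₃) (Sum.inr 1) = w v₂ v₃ := by rw [hw'symm]; exact (hw'new 1).2
        fin_cases c <;>
          simp [ha0, ha1, hw0, hw1, hq0, hq1, hqold, zero_pow hp1] <;> ring
      · have hn0 : ¬ G'.Adj (Sum.inl a) (Sum.inr 0) := fun h => by
          have := (hG'new 0 a).1 ((G'.adj_comm _ _).1 h); tauto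
        have hn1 : ¬ G'.Adj (Sum.inl a) (Sum.inr 1) := fun h => by
          have := (hG'new 1 a).1 ((G'.adj_comm _ _).1 h); tauto
        have hV : ∀ b : V, (if G'.Adj (Sum.inl a) (Sum.inl b) then
            w' (Sum.inl a) (Sum.inl b) * (q (Sum.inl b) c - q (Sum.inl a) c) ^ (p - 1) else 0)
            = (if G.Adj a b then w a b * (P b c - P a c) ^ (p - 1) else 0) := by
          intro b
          have hc1 : ¬(a = v₂ ∧ b = v₃) := by tauto
          have hc2 : ¬(a = v₃ ∧ b = v₂) := by tauto
          by_cases hadj : G.Adj a b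
          · rw [if_pos ((hG'old _ _).2 ⟨hadj, hc1, hc2⟩), hw'old _ _ hadj hc1 hc2,
                hqold, hqold, if_pos hadj]
          · have hna : ¬ G'.Adj (Sum.inl a) (Sum.inl b) := by rw [hG'old]; tauto
            simp [hna, hadj]
        rw [Finset.sum_congr rfl fun b _ => hV b, hstress, if_neg hn0, if_neg hn1]
        ring
end

section
/- Let a, b, c ∈ ℝ with c ≠ 0, and let L be an n×n real matrix of rank n − 2 (n ≥ 2). Consider the (n+2)×(n+2) real matrix M = A + B where A = [[0₂, 0],[0, L]] (block-diagonal with a 2×2 zero block and L), and B has its only nonzero entries in the top-left 4×4 block equal to [[0, c, −c, 0],[c, 0, 0, −c],[−c, 0, 0, c],[0, −c, c, 0]]. Then rank M = n. -/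
open Matrix

/-- A product of submodules is linearly equivalent to the product of the submodules. -/
def subProdEquiv {R M N : Type*} [Semiring R] [AddCommMonoid M] [Module R M]
    [AddCommMonoid N] [Module R N] (p : Submodule R M) (q : Submodule R N) :
    (p.prod q) ≃ₗ[R] p × q where
  toFun x := (⟨x.1.1, x.2.1⟩, ⟨x.1.2, x.2.2⟩)
  invFun y := ⟨(y.1.1, y.2.1), ⟨y.1.2, y.2.2⟩⟩
  map_add' x y := rfl
  map_smul' r x := rfl
  left_inv x := rfl
  right_inv y := rfl

lemma finrank_submodule_prod {M N : Type*} [AddCommGroup M] [Module ℝ M]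
    [AddCommGroup N] [Module ℝ N] [FiniteDimensional ℝ M] [FiniteDimensional ℝ N]
    (p : Submodule ℝ M) (q : Submodule ℝ N) :
    Module.finrank ℝ (p.prod q) = Module.finrank ℝ p + Module.finrank ℝ q := by
  rw [(subProdEquiv p q).finrank_eq, Module.finrank_prod]

lemma range_prodMap' {R M N M' N' : Type*} [CommRing R] [AddCommGroup M] [Module R M]
    [AddCommGroup N] [Module R N] [AddCommGroup M'] [Module R M'] [AddCommGroup N'] [Module R N']
    (f : M →ₗ[R] M') (g : N →ₗ[R] N') :
    LinearMap.range (f.prodMap g) = (LinearMap.range f).prod (LinearMap.range g) := by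
  ext ⟨x, y⟩
  simp only [LinearMap.mem_range, Submodule.mem_prod, LinearMap.prodMap_apply, Prod.mk.injEq,
    Prod.exists]
  constructor
  · rintro ⟨a, b, h1, h2⟩; exact ⟨⟨a, h1⟩, ⟨b, h2⟩⟩
  · rintro ⟨⟨a, h1⟩, ⟨b, h2⟩⟩; exact ⟨a, b, h1, h2⟩

lemma rank_fromBlocks_diag {m n : Type*} [Fintype m] [Fintype n] [DecidableEq m] [DecidableEq n]
    (A : Matrix m m ℝ) (D : Matrix n n ℝ) :
    (fromBlocks A (0 : Matrix m n ℝ) (0 : Matrix n m ℝ) D).rank = A.rank + D.rank := by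
  have h : (fromBlocks A (0 : Matrix m n ℝ) (0 : Matrix n m ℝ) D).mulVecLin
      = (LinearEquiv.sumArrowLequivProdArrow m n ℝ ℝ).symm.toLinearMap ∘ₗ
        (A.mulVecLin.prodMap D.mulVecLin) ∘ₗ
        (LinearEquiv.sumArrowLequivProdArrow m n ℝ ℝ).toLinearMap := by
    apply LinearMap.ext; intro x
    funext i
    cases i <;>
      simp [Matrix.mulVecLin_apply, fromBlocks_mulVec, LinearEquiv.sumArrowLequivProdArrow,
        Equiv.sumArrowEquivProdArrow]
  rw [Matrix.rank, h, LinearMap.range_comp, LinearMap.range_comp, LinearEquiv.range,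
    Submodule.map_top,
    LinearEquiv.finrank_map_eq (LinearEquiv.sumArrowLequivProdArrow m n ℝ ℝ).symm,
    range_prodMap', finrank_submodule_prod]
  rfl


/-- The perturbation matrix `B` of the K₄⁻-extension: its only nonzero entries form the
4×4 block `[[0,c,−c,0],[c,0,0,−c],[−c,0,0,c],[0,−c,c,0]]` on the two new vertices
(`Sum.inl 0`, `Sum.inl 1`) and the two old vertices `v₂, v₃` (`Sum.inr 0`, `Sum.inr 1`). -/
def K4extPerturbation (n : ℕ) (c : ℝ) : Matrix (Fin 2 ⊕ Fin n) (Fin 2 ⊕ Fin n) ℝ :=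
  Matrix.of fun i j =>
    match i, j with
    | Sum.inl a, Sum.inl b => if a ≠ b then c else 0
    | Sum.inl a, Sum.inr k => if (a = 0 ∧ (k : ℕ) = 0) ∨ (a = 1 ∧ (k : ℕ) = 1) then -c else 0
    | Sum.inr k, Sum.inl a => if (a = 0 ∧ (k : ℕ) = 0) ∨ (a = 1 ∧ (k : ℕ) = 1) then -c else 0
    | Sum.inr k, Sum.inr l =>
        if ((k : ℕ) = 0 ∧ (l : ℕ) = 1) ∨ ((k : ℕ) = 1 ∧ (l : ℕ) = 0) then c else 0

/-- Adding the K₄⁻-extension perturbation (with `c ≠ 0`) to the block-diagonal matrix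
`diag(0₂, L)` with `rank L = n − 2` yields a matrix of rank `n`. -/
theorem K4ext_rank (n : ℕ) (hn : 2 ≤ n) (c : ℝ) (hc : c ≠ 0)
    (L : Matrix (Fin n) (Fin n) ℝ) (hL : L.rank = n - 2) :
    (Matrix.fromBlocks (0 : Matrix (Fin 2) (Fin 2) ℝ) 0 0 L + K4extPerturbation n c).rank
      = n := by
  classical
  set D2 : Matrix (Fin 2) (Fin 2) ℝ :=
    Matrix.of fun a b => if a ≠ b then c else 0 with hD2
  set Bu : Matrix (Fin 2) (Fin n) ℝ :=
    Matrix.of fun a k => if (a = 0 ∧ (k : ℕ) = 0) ∨ (a = 1 ∧ (k : ℕ) = 1) then -c else 0 with hBu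
  set Bl : Matrix (Fin n) (Fin 2) ℝ :=
    Matrix.of fun k a => if (a = 0 ∧ (k : ℕ) = 0) ∨ (a = 1 ∧ (k : ℕ) = 1) then -c else 0 with hBl
  set C : Matrix (Fin n) (Fin n) ℝ :=
    Matrix.of fun k l =>
      if ((k : ℕ) = 0 ∧ (l : ℕ) = 1) ∨ ((k : ℕ) = 1 ∧ (l : ℕ) = 0) then c else 0 with hC
  set E : Matrix (Fin 2) (Fin 2) ℝ :=
    Matrix.of fun a b => if a ≠ b then c⁻¹ else 0 with hE
  -- the whole matrix as a block matrix
  have hM : Matrix.fromBlocks (0 : Matrix (Fin 2) (Fin 2) ℝ) 0 0 L + K4extPerturbation n c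
      = Matrix.fromBlocks D2 Bu Bl (L + C) := by
    ext i j
    cases i <;> cases j <;>
      simp [K4extPerturbation, Matrix.add_apply, hD2, hBu, hBl, hC]
  -- D2 is invertible, with explicit inverse E
  have hD2E : D2 * E = 1 := by
    ext a b
    fin_cases a <;> fin_cases b <;>
      simp [Matrix.mul_apply, Fin.sum_univ_two, hD2, hE, Matrix.one_apply] <;>
      field_simp
  have hdet : IsUnit D2.det := by
    have : D2.det = -(c * c) := by
      rw [Matrix.det_fin_two]
      simp [hD2]
    rw [this]
    simp [hc, isUnit_iff_ne_zero, mul_ne_zero hc hc]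
  have : Invertible D2 := D2.invertibleOfIsUnitDet hdet
  have hinvE : ⅟D2 = E := by
    rw [Matrix.invOf_eq_nonsing_inv, Matrix.inv_eq_right_inv hD2E]
  -- the Schur complement computation
  have hSchur : L + C - Bl * ⅟D2 * Bu = L := by
    rw [hinvE]
    have : Bl * E * Bu = C := by
      ext k l
      simp only [Matrix.mul_apply, Fin.sum_univ_two, hBl, hBu, hE, hC, Matrix.of_apply]
      by_cases hk0 : (k : ℕ) = 0 <;> by_cases hk1 : (k : ℕ) = 1 <;>
        by_cases hl0 : (l : ℕ) = 0 <;> by_cases hl1 : (l : ℕ) = 1 <;>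
        simp [hk0, hk1, hl0, hl1, Fin.ext_iff] <;>
        first
          | omega
          | field_simp
          | ring
    rw [this]
    abel
  -- LDU decomposition
  have hLDU := Matrix.fromBlocks_eq_of_invertible₁₁ D2 Bu Bl (L + C)
  rw [hM, hLDU, hSchur]
  have hU : IsUnit (Matrix.fromBlocks (1 : Matrix (Fin 2) (Fin 2) ℝ) 0 (Bl * ⅟D2)
      (1 : Matrix (Fin n) (Fin n) ℝ)).det := by
    rw [Matrix.det_fromBlocks_zero₁₂]
    simp
  have hV : IsUnit (Matrix.fromBlocks (1 : Matrix (Fin 2) (Fin 2) ℝ) (⅟D2 * Bu) 0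
      (1 : Matrix (Fin n) (Fin n) ℝ)).det := by
    rw [Matrix.det_fromBlocks_zero₂₁]
    simp
  rw [Matrix.rank_mul_eq_left_of_isUnit_det _ _ hV,
    Matrix.rank_mul_eq_right_of_isUnit_det _ _ hU,
    rank_fromBlocks_diag, hL, Matrix.rank_of_isUnit D2 (isUnit_of_invertible D2)]
  simp only [Fintype.card_fin]
  omega
end

section
/- Let p ≥ 2 be an even integer and d ≥ 1. Let (G,𝐩) be a d-dimensional framework on vertices {1,…,n} and G' = H₁ ∪ H₂ a decomposition with E(H₁) ∩ E(H₂) = ∅, V(H₁) ∩ V(H₂) = {v}, and 𝐩(v) = 0. Let σ be a permutation of {1,…,d} and define 𝐪: V(G) → ℝ^d by 𝐪(u) = 𝐩(u) for u ∈ V(H₁) and (𝐪(u))_k = (𝐩(u))_{σ(k)} for u ∈ V(H₂)∖{v} and each k. Then for every edge ij ∈ E(G), Σ_{k=1}^d ((𝐪(i))_k − (𝐪(j))_k)^p = Σ_{k=1}^d ((𝐩(i))_k − (𝐩(j))_k)^p; i.e., (G,𝐪) is equivalent to (G,𝐩) in ℓ_p^d. -/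
open Finset

/-- Permuting the coordinates of the points on one side of a 1-separator (with the cut
vertex at the origin) yields a framework equivalent in `ℓ_p^d`. -/
theorem one_separator_coordinate_permutation_equivalent {V : Type*} [Fintype V]
    (p d : ℕ) (hp : 2 ≤ p) (hpe : Even p) (hd : 1 ≤ d)
    (G H₁ H₂ : SimpleGraph V)
    (hunion : G = H₁ ⊔ H₂)
    (hedis : Disjoint H₁.edgeSet H₂.edgeSet)
    (v : V) (hsep : H₁.support ∩ H₂.support = {v})
    (P : V → Fin d → ℝ) (hPv : P v = 0)
    (σ : Equiv.Perm (Fin d))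
    (Q : V → Fin d → ℝ)
    (hQ1 : ∀ u ∈ H₁.support, Q u = P u)
    (hQ2 : ∀ u ∈ H₂.support, u ≠ v → ∀ k, Q u k = P u (σ k)) :
    ∀ i j : V, G.Adj i j →
      ∑ k, (Q i k - Q j k) ^ p = ∑ k, (P i k - P j k) ^ p := by
  intro i j hij
  have hvmem : v ∈ H₁.support ∩ H₂.support := by rw [hsep]; rfl
  have hQv : Q v = P v := hQ1 v hvmem.1
  rw [hunion] at hij
  rcases hij with h | h
  · rw [hQ1 i ⟨j, h⟩, hQ1 j ⟨i, h.symm⟩]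
  · have hi : i ∈ H₂.support := ⟨j, h⟩
    have hj : j ∈ H₂.support := ⟨i, h.symm⟩
    by_cases hiv : i = v
    · have hjv : j ≠ v := fun hjv => h.ne (hiv.trans hjv.symm)
      subst hiv
      calc ∑ k, (Q i k - Q j k) ^ p = ∑ k, (P j (σ k)) ^ p := by
            refine Finset.sum_congr rfl fun k _ => ?_
            rw [hQv, hPv, hQ2 j hj hjv, Pi.zero_apply, zero_sub, hpe.neg_pow]
        _ = ∑ k, (P j k) ^ p := Equiv.sum_comp σ (fun k => (P j k) ^ p)
        _ = ∑ k, (P i k - P j k) ^ p := by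
            refine Finset.sum_congr rfl fun k _ => ?_
            rw [hPv, Pi.zero_apply, zero_sub, hpe.neg_pow]
    · by_cases hjv : j = v
      · subst hjv
        calc ∑ k, (Q i k - Q j k) ^ p = ∑ k, (P i (σ k)) ^ p := by
              refine Finset.sum_congr rfl fun k _ => ?_
              rw [hQv, hPv, hQ2 i hi hiv, Pi.zero_apply, sub_zero]
          _ = ∑ k, (P i k) ^ p := Equiv.sum_comp σ (fun k => (P i k) ^ p)
          _ = ∑ k, (P i k - P j k) ^ p := by
              refine Finset.sum_congr rfl fun k _ => ?_
              rw [hPv, Pi.zero_apply, sub_zero]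
      · calc ∑ k, (Q i k - Q j k) ^ p = ∑ k, (P i (σ k) - P j (σ k)) ^ p := by
              refine Finset.sum_congr rfl fun k _ => ?_
              rw [hQ2 i hi hiv, hQ2 j hj hjv]
          _ = ∑ k, (P i k - P j k) ^ p := Equiv.sum_comp σ (fun k => (P i k - P j k) ^ p)
end
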